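/- Let D be a chord diagram containing no H-configuration, and let D' be obtained from D by a strong third move in the direction in which the three distinguished chords pairwise do not cross in D and their replacements pairwise cross in D' (a move of type (3a)). Then the number of trefoil triples in D' equals the number of trefoil triples in D plus 1. (The inductive step in the proof of Proposition 6: each move (3a) creates exactly one new trefoil sub-chord diagram.) -/
import Mathlib


open scoped Classical

/-- Two chords of a chord diagram on the points `0 < 1 < ⋯ < N-1` (in this cyclic
order) cross if their endpoints interleave. -/
def Crosses {N : ℕ} (c d : Sym2 (Fin N)) : Prop :=
  ∃ a b x y : Fin N, a < x ∧ x < b ∧ b < y ∧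
    ((c = s(a, b) ∧ d = s(x, y)) ∨ (c = s(x, y) ∧ d = s(a, b)))

/-- A chord diagram of order `n`: a partition of the `2n` points `0, 1, …, 2n-1`
(in this cyclic order on a circle) into `n` unordered pairs, the chords. -/
structure ChordDiagram (n : ℕ) where
  chords : Finset (Sym2 (Fin (2 * n)))
  not_diag : ∀ c ∈ chords, ¬ c.IsDiag
  cover : ∀ x : Fin (2 * n), ∃! c, c ∈ chords ∧ x ∈ c

/-- The trivializing number: the minimum number of chords whose deletion yields a
trivial chord diagram (one with no two crossing chords). -/
noncomputable def tr {n : ℕ} (D : ChordDiagram n) : ℕ :=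
  sInf {k | ∃ S ⊆ D.chords, S.card = k ∧
    ∀ c ∈ D.chords \ S, ∀ d ∈ D.chords \ S, ¬ Crosses c d}

/-- The cross chord number: the number of unordered pairs of chords that cross. -/
noncomputable def Xnum {n : ℕ} (D : ChordDiagram n) : ℕ :=
  ((D.chords ×ˢ D.chords).filter fun p => Crosses p.1 p.2).card / 2

/-- Two points are cyclically adjacent on the circle `0, 1, …, N-1`. -/
def Adjacent {N : ℕ} (p q : Fin N) : Prop :=
  (p.val + 1) % N = q.val ∨ (q.val + 1) % N = p.val

/-- The ternary cyclic-order relation on the points `0, 1, …, N-1`. -/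
def CyclicBtw {N : ℕ} (a b c : Fin N) : Prop :=
  (a < b ∧ b < c) ∨ (b < c ∧ c < a) ∨ (c < a ∧ a < b)

/-- A first move (first flat Reidemeister move): `D'` is obtained from `D` by
adding an isolated chord. -/
def FirstMove {n : ℕ} (D : ChordDiagram n) (D' : ChordDiagram (n + 1)) : Prop :=
  ∃ ι : Fin (2 * n) → Fin (2 * (n + 1)),
    Function.Injective ι ∧
    (∀ a b c, CyclicBtw a b c → CyclicBtw (ι a) (ι b) (ι c)) ∧
    (∀ ch ∈ D.chords, ch.map ι ∈ D'.chords) ∧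
    ∃ p q : Fin (2 * (n + 1)), Adjacent p q ∧ s(p, q) ∈ D'.chords ∧
      ∀ x, x ∉ Set.range ι ↔ (x = p ∨ x = q)

/-- A triple move with distinguished pairs `A = {a₁, a₂}`, `B = {b₁, b₂}`,
`C = {c₁, c₂}` of cyclically adjacent points and distinguished chords
`s(a₁, b₁)`, `s(a₂, c₁)`, `s(b₂, c₂)`: `D'` is obtained from `D` by transposing
the two points of each of `A`, `B`, `C`. -/
def TripleMoveAt {n : ℕ} (D D' : ChordDiagram n)
    (a₁ a₂ b₁ b₂ c₁ c₂ : Fin (2 * n)) : Prop :=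
  Adjacent a₁ a₂ ∧ Adjacent b₁ b₂ ∧ Adjacent c₁ c₂ ∧
  ([a₁, a₂, b₁, b₂, c₁, c₂].Pairwise (· ≠ ·)) ∧
  s(a₁, b₁) ∈ D.chords ∧ s(a₂, c₁) ∈ D.chords ∧ s(b₂, c₂) ∈ D.chords ∧
  D'.chords = D.chords.image
    (Sym2.map (Equiv.swap a₁ a₂ * Equiv.swap b₁ b₂ * Equiv.swap c₁ c₂))

/-- Three chords pairwise cross. -/
def PairwiseCross {N : ℕ} (x y z : Sym2 (Fin N)) : Prop :=
  Crosses x y ∧ Crosses x z ∧ Crosses y z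

/-- Exactly one of the three pairs among three chords crosses. -/
def ExactlyOneCross {N : ℕ} (x y z : Sym2 (Fin N)) : Prop :=
  (Crosses x y ∧ ¬ Crosses x z ∧ ¬ Crosses y z) ∨
  (¬ Crosses x y ∧ Crosses x z ∧ ¬ Crosses y z) ∨
  (¬ Crosses x y ∧ ¬ Crosses x z ∧ Crosses y z)

/-- A strong third move: a triple move whose three distinguished chords pairwise
cross in `D`, or whose three replacement chords pairwise cross in `D'`. -/
def StrongThirdMove {n : ℕ} (D D' : ChordDiagram n) : Prop :=
  ∃ a₁ a₂ b₁ b₂ c₁ c₂, TripleMoveAt D D' a₁ a₂ b₁ b₂ c₁ c₂ ∧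
    (PairwiseCross s(a₁, b₁) s(a₂, c₁) s(b₂, c₂) ∨
     PairwiseCross s(a₂, b₂) s(a₁, c₂) s(b₁, c₁))

/-- A weak third move: a triple move such that exactly one pair of the three
distinguished chords crosses in `D`, or exactly one pair of the three
replacement chords crosses in `D'`. -/
def WeakThirdMove {n : ℕ} (D D' : ChordDiagram n) : Prop :=
  ∃ a₁ a₂ b₁ b₂ c₁ c₂, TripleMoveAt D D' a₁ a₂ b₁ b₂ c₁ c₂ ∧
    (ExactlyOneCross s(a₁, b₁) s(a₂, c₁) s(b₂, c₂) ∨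
     ExactlyOneCross s(a₂, b₂) s(a₁, c₂) s(b₁, c₁))


/-- An H-configuration: three chords `h`, `p`, `q` such that `p` and `q` both
cross `h` but `p` and `q` do not cross each other. -/
def HasH {n : ℕ} (D : ChordDiagram n) : Prop :=
  ∃ h p q, h ∈ D.chords ∧ p ∈ D.chords ∧ q ∈ D.chords ∧
    h ≠ p ∧ h ≠ q ∧ p ≠ q ∧
    Crosses p h ∧ Crosses q h ∧ ¬ Crosses p q

/-- The number of trefoil triples: sets of three chords that pairwise cross. -/
noncomputable def trefoilCount {n : ℕ} (D : ChordDiagram n) : ℕ :=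
  ((D.chords.powersetCard 3).filter
    fun S => ∀ x ∈ S, ∀ y ∈ S, x ≠ y → Crosses x y).card



lemma crosses_iff {N : ℕ} (u v x y : Fin N) :
    Crosses s(u,v) s(x,y) ↔
      (u.val < x.val ∧ x.val < v.val ∧ v.val < y.val) ∨
      (u.val < y.val ∧ y.val < v.val ∧ v.val < x.val) ∨
      (v.val < x.val ∧ x.val < u.val ∧ u.val < y.val) ∨
      (v.val < y.val ∧ y.val < u.val ∧ u.val < x.val) ∨
      (x.val < u.val ∧ u.val < y.val ∧ y.val < v.val) ∨
      (y.val < u.val ∧ u.val < x.val ∧ x.val < v.val) ∨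
      (x.val < v.val ∧ v.val < y.val ∧ y.val < u.val) ∨
      (y.val < v.val ∧ v.val < x.val ∧ x.val < u.val) := by
  constructor
  · rintro ⟨a, b, p, q, h1, h2, h3, (⟨hc, hd⟩ | ⟨hc, hd⟩)⟩ <;>
      rw [Sym2.eq_iff] at hc hd <;>
      rcases hc with ⟨rfl, rfl⟩ | ⟨rfl, rfl⟩ <;>
      rcases hd with ⟨rfl, rfl⟩ | ⟨rfl, rfl⟩ <;>
      simp only [Fin.lt_def] at h1 h2 h3 <;> omega
  · have comm : ∀ p q : Fin N, s(p,q) = s(q,p) := fun p q => Sym2.eq_swap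
    rintro (⟨h1,h2,h3⟩|⟨h1,h2,h3⟩|⟨h1,h2,h3⟩|⟨h1,h2,h3⟩|⟨h1,h2,h3⟩|⟨h1,h2,h3⟩|⟨h1,h2,h3⟩|⟨h1,h2,h3⟩)
    · exact ⟨u, v, x, y, h1, h2, h3, Or.inl ⟨rfl, rfl⟩⟩
    · exact ⟨u, v, y, x, h1, h2, h3, Or.inl ⟨rfl, comm x y⟩⟩
    · exact ⟨v, u, x, y, h1, h2, h3, Or.inl ⟨comm u v, rfl⟩⟩
    · exact ⟨v, u, y, x, h1, h2, h3, Or.inl ⟨comm u v, comm x y⟩⟩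
    · exact ⟨x, y, u, v, h1, h2, h3, Or.inr ⟨rfl, rfl⟩⟩
    · exact ⟨y, x, u, v, h1, h2, h3, Or.inr ⟨rfl, comm x y⟩⟩
    · exact ⟨x, y, v, u, h1, h2, h3, Or.inr ⟨comm u v, rfl⟩⟩
    · exact ⟨y, x, v, u, h1, h2, h3, Or.inr ⟨comm u v, comm x y⟩⟩

lemma crosses_comm {N : ℕ} {c d : Sym2 (Fin N)} : Crosses c d ↔ Crosses d c := by
  constructor <;> rintro ⟨a, b, x, y, h1, h2, h3, (⟨h5, h6⟩ | ⟨h5, h6⟩)⟩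
  · exact ⟨a, b, x, y, h1, h2, h3, Or.inr ⟨h6, h5⟩⟩
  · exact ⟨a, b, x, y, h1, h2, h3, Or.inl ⟨h6, h5⟩⟩
  · exact ⟨a, b, x, y, h1, h2, h3, Or.inr ⟨h6, h5⟩⟩
  · exact ⟨a, b, x, y, h1, h2, h3, Or.inl ⟨h6, h5⟩⟩

lemma crosses_irrefl {N : ℕ} (c : Sym2 (Fin N)) : ¬ Crosses c c := by
  induction c using Sym2.ind with
  | _ u v => rw [crosses_iff]; omega

lemma adjacent_elim {N : ℕ} {p q : Fin N} (h : Adjacent p q) :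
    p.val + 1 = q.val ∨ (p.val + 1 = N ∧ q.val = 0) ∨
    q.val + 1 = p.val ∨ (q.val + 1 = N ∧ p.val = 0) := by
  have h1 := p.isLt; have h2 := q.isLt
  rcases h with h | h
  · rcases Nat.lt_or_ge (p.val + 1) N with hlt | hge
    · rw [Nat.mod_eq_of_lt hlt] at h; omega
    · have hN : p.val + 1 = N := by omega
      rw [hN, Nat.mod_self] at h; omega
  · rcases Nat.lt_or_ge (q.val + 1) N with hlt | hge
    · rw [Nat.mod_eq_of_lt hlt] at h; omega
    · have hN : q.val + 1 = N := by omega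
      rw [hN, Nat.mod_self] at h; omega

lemma crosses_swap {N : ℕ} (p q m x y : Fin N) (hadj : Adjacent p q)
    (hxp : x ≠ p) (hxq : x ≠ q) (hyp' : y ≠ p) (hyq : y ≠ q)
    (hmp : m ≠ p) (hmq : m ≠ q) (hxm : x ≠ m) (hym : y ≠ m) (hxy : x ≠ y) :
    Crosses s(x,y) s(p,m) ↔ Crosses s(x,y) s(q,m) := by
  rw [crosses_iff, crosses_iff]
  have h := adjacent_elim hadj
  have h1 := p.isLt; have h2 := q.isLt; have h3 := m.isLt
  have h4 := x.isLt; have h5 := y.isLt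
  simp only [Ne, ← Fin.val_eq_val] at hxp hxq hyp' hyq hmp hmq hxm hym hxy
  constructor <;>
  · intro hc
    rcases h with h | ⟨h, h'⟩ | h | ⟨h, h'⟩ <;>
      rcases hc with hc|hc|hc|hc|hc|hc|hc|hc <;>
      first
        | (exfalso; omega)
        | exact Or.inl (by omega)
        | exact Or.inr (Or.inl (by omega))
        | exact Or.inr (Or.inr (Or.inl (by omega)))
        | exact Or.inr (Or.inr (Or.inr (Or.inl (by omega))))
        | exact Or.inr (Or.inr (Or.inr (Or.inr (Or.inl (by omega)))))
        | exact Or.inr (Or.inr (Or.inr (Or.inr (Or.inr (Or.inl (by omega))))))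
        | exact Or.inr (Or.inr (Or.inr (Or.inr (Or.inr (Or.inr (Or.inl (by omega)))))))
        | exact Or.inr (Or.inr (Or.inr (Or.inr (Or.inr (Or.inr (Or.inr (by omega)))))))

lemma sym2_rep {α : Type*} (e : Sym2 α) : ∃ u v, e = s(u, v) :=
  Sym2.ind (fun u v => ⟨u, v, rfl⟩) e

/-- inductive step of Proposition 6: a move of type `(3a)`
(a strong third move whose distinguished chords pairwise do not cross in `D` and
whose replacement chords pairwise cross in `D'`) applied to an H-free diagram
creates exactly one new trefoil triple. -/
theorem trefoilCount_of_move3a {n : ℕ} (D D' : ChordDiagram n)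
    (hH : ¬ HasH D)
    (h : ∃ a₁ a₂ b₁ b₂ c₁ c₂, TripleMoveAt D D' a₁ a₂ b₁ b₂ c₁ c₂ ∧
      ¬ Crosses s(a₁, b₁) s(a₂, c₁) ∧ ¬ Crosses s(a₁, b₁) s(b₂, c₂) ∧
      ¬ Crosses s(a₂, c₁) s(b₂, c₂) ∧
      PairwiseCross s(a₂, b₂) s(a₁, c₂) s(b₁, c₁)) :
    trefoilCount D' = trefoilCount D + 1 := by
  obtain ⟨a₁, a₂, b₁, b₂, c₁, c₂,
    ⟨hadjA, hadjB, hadjC, hpw, hg1, hg2, hg3, hchords⟩, h12, h13, h23, hPW⟩ := h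
  simp only [List.pairwise_cons, List.mem_cons, List.mem_singleton,
    List.not_mem_nil, forall_eq_or_imp, forall_eq, ne_eq, List.Pairwise.nil] at hpw
  obtain ⟨⟨nA12, nA1B1, nA1B2, nA1C1, nA1C2, -⟩, ⟨nA2B1, nA2B2, nA2C1, nA2C2, -⟩,
    ⟨nB12, nB1C1, nB1C2, -⟩, ⟨nB2C1, nB2C2, -⟩, ⟨nC12, -⟩, -⟩ := hpw
  set σ : Equiv.Perm (Fin (2 * n)) :=
    Equiv.swap a₁ a₂ * Equiv.swap b₁ b₂ * Equiv.swap c₁ c₂ with hσdef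
  have hσ : ∀ z, σ z = Equiv.swap a₁ a₂ (Equiv.swap b₁ b₂ (Equiv.swap c₁ c₂ z)) :=
    fun z => rfl
  -- evaluation of σ
  have hσa₁ : σ a₁ = a₂ := by
    rw [hσ, Equiv.swap_apply_of_ne_of_ne nA1C1 nA1C2,
      Equiv.swap_apply_of_ne_of_ne nA1B1 nA1B2, Equiv.swap_apply_left]
  have hσa₂ : σ a₂ = a₁ := by
    rw [hσ, Equiv.swap_apply_of_ne_of_ne nA2C1 nA2C2,
      Equiv.swap_apply_of_ne_of_ne nA2B1 nA2B2, Equiv.swap_apply_right]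
  have hσb₁ : σ b₁ = b₂ := by
    rw [hσ, Equiv.swap_apply_of_ne_of_ne nB1C1 nB1C2, Equiv.swap_apply_left,
      Equiv.swap_apply_of_ne_of_ne (fun hh => nA1B2 hh.symm) (fun hh => nA2B2 hh.symm)]
  have hσb₂ : σ b₂ = b₁ := by
    rw [hσ, Equiv.swap_apply_of_ne_of_ne nB2C1 nB2C2, Equiv.swap_apply_right,
      Equiv.swap_apply_of_ne_of_ne (fun hh => nA1B1 hh.symm) (fun hh => nA2B1 hh.symm)]
  have hσc₁ : σ c₁ = c₂ := by
    rw [hσ, Equiv.swap_apply_left,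
      Equiv.swap_apply_of_ne_of_ne (fun hh => nB1C2 hh.symm) (fun hh => nB2C2 hh.symm),
      Equiv.swap_apply_of_ne_of_ne (fun hh => nA1C2 hh.symm) (fun hh => nA2C2 hh.symm)]
  have hσc₂ : σ c₂ = c₁ := by
    rw [hσ, Equiv.swap_apply_right,
      Equiv.swap_apply_of_ne_of_ne (fun hh => nB1C1 hh.symm) (fun hh => nB2C1 hh.symm),
      Equiv.swap_apply_of_ne_of_ne (fun hh => nA1C1 hh.symm) (fun hh => nA2C1 hh.symm)]
  have hσfix : ∀ z, z ≠ a₁ → z ≠ a₂ → z ≠ b₁ → z ≠ b₂ → z ≠ c₁ → z ≠ c₂ → σ z = z := by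
    intro z h1 h2 h3 h4 h5 h6
    rw [hσ, Equiv.swap_apply_of_ne_of_ne h5 h6, Equiv.swap_apply_of_ne_of_ne h3 h4,
      Equiv.swap_apply_of_ne_of_ne h1 h2]
  have hσinv : ∀ z, σ (σ z) = z := by
    intro z
    by_cases h1 : z = a₁; · rw [h1, hσa₁, hσa₂]
    by_cases h2 : z = a₂; · rw [h2, hσa₂, hσa₁]
    by_cases h3 : z = b₁; · rw [h3, hσb₁, hσb₂]
    by_cases h4 : z = b₂; · rw [h4, hσb₂, hσb₁]
    by_cases h5 : z = c₁; · rw [h5, hσc₁, hσc₂]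
    by_cases h6 : z = c₂; · rw [h6, hσc₂, hσc₁]
    rw [hσfix z h1 h2 h3 h4 h5 h6, hσfix z h1 h2 h3 h4 h5 h6]
  set f : Sym2 (Fin (2 * n)) → Sym2 (Fin (2 * n)) := Sym2.map σ with hfdef
  have hfpair : ∀ u v, f s(u, v) = s(σ u, σ v) := fun u v => Sym2.map_pair_eq σ u v
  have hff : ∀ e, f (f e) = e := by
    intro e
    induction e using Sym2.ind with
    | _ u v => rw [hfpair, hfpair, hσinv, hσinv]
  have hfinj : Function.Injective f := fun e e' hh => by rw [← hff e, hh, hff]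
  -- the distinguished chords and their images
  have hfg1 : f s(a₁, b₁) = s(a₂, b₂) := by rw [hfpair, hσa₁, hσb₁]
  have hfg2 : f s(a₂, c₁) = s(a₁, c₂) := by rw [hfpair, hσa₂, hσc₁]
  have hfg3 : f s(b₂, c₂) = s(b₁, c₁) := by rw [hfpair, hσb₂, hσc₂]
  have hfg1' : f s(a₂, b₂) = s(a₁, b₁) := by rw [hfpair, hσa₂, hσb₂]
  have hfg2' : f s(a₁, c₂) = s(a₂, c₁) := by rw [hfpair, hσa₁, hσc₂]
  have hfg3' : f s(b₁, c₁) = s(b₂, c₂) := by rw [hfpair, hσb₁, hσc₁]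
  -- distinguished predicate
  set Dist : Sym2 (Fin (2 * n)) → Prop :=
    fun e => e = s(a₁, b₁) ∨ e = s(a₂, c₁) ∨ e = s(b₂, c₂) with hDist
  -- uniqueness of chord at a point
  have huniq : ∀ e ∈ D.chords, ∀ e' ∈ D.chords, ∀ z : Fin (2 * n),
      z ∈ e → z ∈ e' → e = e' := by
    intro e he e' he' z hz hz'
    exact (D.cover z).unique ⟨he, hz⟩ ⟨he', hz'⟩
  -- a non-distinguished chord avoids the six points
  have havoid : ∀ e ∈ D.chords, ¬ Dist e → ∀ z : Fin (2 * n), z ∈ e →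
      z ≠ a₁ ∧ z ≠ a₂ ∧ z ≠ b₁ ∧ z ≠ b₂ ∧ z ≠ c₁ ∧ z ≠ c₂ := by
    intro e he hd z hz
    refine ⟨?_, ?_, ?_, ?_, ?_, ?_⟩ <;> rintro rfl
    · exact hd (Or.inl (huniq e he _ hg1 z hz (Sym2.mem_mk_left z b₁)))
    · exact hd (Or.inr (Or.inl (huniq e he _ hg2 z hz (Sym2.mem_mk_left z c₁))))
    · exact hd (Or.inl (huniq e he _ hg1 z hz (Sym2.mem_mk_right a₁ z)))
    · exact hd (Or.inr (Or.inr (huniq e he _ hg3 z hz (Sym2.mem_mk_left z c₂))))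
    · exact hd (Or.inr (Or.inl (huniq e he _ hg2 z hz (Sym2.mem_mk_right a₂ z))))
    · exact hd (Or.inr (Or.inr (huniq e he _ hg3 z hz (Sym2.mem_mk_right b₂ z))))
  have hfixe : ∀ e ∈ D.chords, ¬ Dist e → f e = e := by
    intro e he hd
    obtain ⟨u, v, rfl⟩ := sym2_rep e
    have hu := havoid _ he hd u (Sym2.mem_mk_left u v)
    have hv := havoid _ he hd v (Sym2.mem_mk_right u v)
    rw [hfpair, hσfix u hu.1 hu.2.1 hu.2.2.1 hu.2.2.2.1 hu.2.2.2.2.1 hu.2.2.2.2.2,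
      hσfix v hv.1 hv.2.1 hv.2.2.1 hv.2.2.2.1 hv.2.2.2.2.1 hv.2.2.2.2.2]
  have hadjA' : Adjacent a₂ a₁ := hadjA.symm
  have hadjB' : Adjacent b₂ b₁ := hadjB.symm
  have hadjC' : Adjacent c₂ c₁ := hadjC.symm
  -- crossing preserved when the first chord is not distinguished
  have hpres : ∀ e ∈ D.chords, ¬ Dist e → ∀ d ∈ D.chords,
      (Crosses e d ↔ Crosses (f e) (f d)) := by
    intro e he hd d hdD
    obtain ⟨u, v, rfl⟩ := sym2_rep e
    have hu := havoid _ he hd u (Sym2.mem_mk_left u v)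
    have hv := havoid _ he hd v (Sym2.mem_mk_right u v)
    have huv : u ≠ v := by
      intro hh; exact D.not_diag _ he (by rw [Sym2.mk_isDiag_iff]; exact hh)
    rw [hfixe _ he hd]
    by_cases hdd : Dist d
    · rcases hdd with rfl | rfl | rfl
      · rw [hfg1]
        calc Crosses s(u,v) s(a₁, b₁)
            ↔ Crosses s(u,v) s(a₂, b₁) := by
              refine crosses_swap a₁ a₂ b₁ u v hadjA hu.1 hu.2.1 hv.1 hv.2.1
                (fun hh => nA1B1 hh.symm) (fun hh => nA2B1 hh.symm)
                (fun hh => hu.2.2.1 hh) (fun hh => hv.2.2.1 hh) huv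
          _ ↔ Crosses s(u,v) s(b₁, a₂) := by rw [Sym2.eq_swap (a := a₂) (b := b₁)]
          _ ↔ Crosses s(u,v) s(b₂, a₂) := by
              refine crosses_swap b₁ b₂ a₂ u v hadjB hu.2.2.1 hu.2.2.2.1 hv.2.2.1 hv.2.2.2.1
                nA2B1 nA2B2 hu.2.1 hv.2.1 huv
          _ ↔ Crosses s(u,v) s(a₂, b₂) := by rw [Sym2.eq_swap (a := b₂) (b := a₂)]
      · rw [hfg2]
        calc Crosses s(u,v) s(a₂, c₁)
            ↔ Crosses s(u,v) s(a₁, c₁) := by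
              refine crosses_swap a₂ a₁ c₁ u v hadjA' hu.2.1 hu.1 hv.2.1 hv.1
                (fun hh => nA2C1 hh.symm) (fun hh => nA1C1 hh.symm)
                hu.2.2.2.2.1 hv.2.2.2.2.1 huv
          _ ↔ Crosses s(u,v) s(c₁, a₁) := by rw [Sym2.eq_swap (a := a₁) (b := c₁)]
          _ ↔ Crosses s(u,v) s(c₂, a₁) := by
              refine crosses_swap c₁ c₂ a₁ u v hadjC hu.2.2.2.2.1 hu.2.2.2.2.2
                hv.2.2.2.2.1 hv.2.2.2.2.2 nA1C1 nA1C2 hu.1 hv.1 huv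
          _ ↔ Crosses s(u,v) s(a₁, c₂) := by rw [Sym2.eq_swap (a := c₂) (b := a₁)]
      · rw [hfg3]
        calc Crosses s(u,v) s(b₂, c₂)
            ↔ Crosses s(u,v) s(b₁, c₂) := by
              refine crosses_swap b₂ b₁ c₂ u v hadjB' hu.2.2.2.1 hu.2.2.1 hv.2.2.2.1 hv.2.2.1
                (fun hh => nB2C2 hh.symm) (fun hh => nB1C2 hh.symm)
                hu.2.2.2.2.2 hv.2.2.2.2.2 huv
          _ ↔ Crosses s(u,v) s(c₂, b₁) := by rw [Sym2.eq_swap (a := b₁) (b := c₂)]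
          _ ↔ Crosses s(u,v) s(c₁, b₁) := by
              refine crosses_swap c₂ c₁ b₁ u v hadjC' hu.2.2.2.2.2 hu.2.2.2.2.1
                hv.2.2.2.2.2 hv.2.2.2.2.1 nB1C2 nB1C1 hu.2.2.1 hv.2.2.1 huv
          _ ↔ Crosses s(u,v) s(b₁, c₁) := by rw [Sym2.eq_swap (a := c₁) (b := b₁)]
    · rw [hfixe _ hdD hdd]
  -- crossing preserved when not both chords are distinguished
  have hpres2 : ∀ e ∈ D.chords, ∀ d ∈ D.chords, ¬ (Dist e ∧ Dist d) →
      (Crosses e d ↔ Crosses (f e) (f d)) := by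
    intro e he d hd hnb
    by_cases hde : Dist e
    · have hdd : ¬ Dist d := fun hh => hnb ⟨hde, hh⟩
      rw [crosses_comm, crosses_comm (c := f e)]
      exact hpres d hd hdd e he
    · exact hpres e he hde d hd
  -- distinguished chords pairwise do not cross
  have hnocrossD : ∀ e d, Dist e → Dist d → e ≠ d → ¬ Crosses e d := by
    intro e d he hd hed
    rcases he with rfl | rfl | rfl <;> rcases hd with rfl | rfl | rfl <;>
      first
        | exact absurd rfl hed
        | exact h12
        | exact h13
        | exact h23
        | exact fun hc => h12 (crosses_comm.mp hc)
        | exact fun hc => h13 (crosses_comm.mp hc)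
        | exact fun hc => h23 (crosses_comm.mp hc)
  -- the new trefoil triple
  set T₀ : Finset (Sym2 (Fin (2 * n))) := {s(a₂, b₂), s(a₁, c₂), s(b₁, c₁)} with hT₀def
  have hne12' : s(a₂, b₂) ≠ s(a₁, c₂) := by
    intro hh; exact crosses_irrefl _ (hh ▸ hPW.1)
  have hne13' : s(a₂, b₂) ≠ s(b₁, c₁) := by
    intro hh; exact crosses_irrefl _ (hh ▸ hPW.2.1)
  have hne23' : s(a₁, c₂) ≠ s(b₁, c₁) := by
    intro hh; exact crosses_irrefl _ (hh ▸ hPW.2.2)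
  have hne12 : s(a₁, b₁) ≠ s(a₂, c₁) := by
    intro hh; apply hne12'; rw [← hfg1, ← hfg2, hh]
  have hne13 : s(a₁, b₁) ≠ s(b₂, c₂) := by
    intro hh; apply hne13'; rw [← hfg1, ← hfg3, hh]
  have hne23 : s(a₂, c₁) ≠ s(b₂, c₂) := by
    intro hh; apply hne23'; rw [← hfg2, ← hfg3, hh]
  -- membership facts in D'
  have hmem' : ∀ e ∈ D.chords, f e ∈ D'.chords := by
    intro e he; rw [hchords]; exact Finset.mem_image_of_mem _ he
  -- the key set identity
  have key : ((D'.chords.powersetCard 3).filter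
        fun S => ∀ x ∈ S, ∀ y ∈ S, x ≠ y → Crosses x y) =
      insert T₀ (((D.chords.powersetCard 3).filter
        fun S => ∀ x ∈ S, ∀ y ∈ S, x ≠ y → Crosses x y).image (Finset.image f)) := by
    ext S
    simp only [Finset.mem_insert, Finset.mem_image, Finset.mem_filter,
      Finset.mem_powersetCard]
    constructor
    · rintro ⟨⟨hsub, hcard⟩, hP⟩
      set S₀ : Finset (Sym2 (Fin (2 * n))) := S.image f with hS₀def
      have hSS : S₀.image f = S := by
        rw [hS₀def, Finset.image_image]
        have : (f ∘ f) = id := funext hff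
        rw [this, Finset.image_id]
      have hS₀sub : S₀ ⊆ D.chords := by
        intro x hx
        obtain ⟨e, heS, rfl⟩ := Finset.mem_image.mp hx
        have heD' : e ∈ D'.chords := hsub heS
        rw [hchords] at heD'
        obtain ⟨e₀, he₀, rfl⟩ := Finset.mem_image.mp heD'
        rw [hff]; exact he₀
      have hS₀card : S₀.card = 3 := by
        rw [hS₀def, Finset.card_image_of_injective _ hfinj, hcard]
      have hmemS : ∀ x ∈ S₀, f x ∈ S := by
        intro x hx; rw [← hSS]; exact Finset.mem_image_of_mem _ hx
      -- H-configuration helper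
      have hHcase : ∀ p q, p ∈ S₀ → q ∈ S₀ → p ≠ q → ¬ Crosses p q →
          Dist p → Dist q → (∀ r, Dist r → r ∈ S₀ → r = p ∨ r = q) → False := by
        intro p q hpS hqS hpq hnc hdp hdq hthird
        have hne2 : ¬ S₀ ⊆ {p, q} := by
          intro hsub'
          have := Finset.card_le_card hsub'
          have h2 : ({p, q} : Finset (Sym2 (Fin (2 * n)))).card ≤ 2 :=
            Finset.card_insert_le _ _ |>.trans (by simp)
          omega
        obtain ⟨e, heS, hem⟩ := Finset.not_subset.mp hne2
        simp only [Finset.mem_insert, Finset.mem_singleton] at hem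
        push_neg at hem
        have hde : ¬ Dist e := fun hh => by
          rcases hthird e hh heS with rfl | rfl
          · exact hem.1 rfl
          · exact hem.2 rfl
        have heD : e ∈ D.chords := hS₀sub heS
        have hpD : p ∈ D.chords := hS₀sub hpS
        have hqD : q ∈ D.chords := hS₀sub hqS
        have hcep : Crosses e p := by
          rw [hpres e heD hde p hpD]
          exact hP (f e) (hmemS e heS) (f p) (hmemS p hpS)
            (fun hh => hem.1 (hfinj hh))
        have hceq : Crosses e q := by
          rw [hpres e heD hde q hqD]
          exact hP (f e) (hmemS e heS) (f q) (hmemS q hqS)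
            (fun hh => hem.2 (hfinj hh))
        exact hH ⟨e, p, q, heD, hpD, hqD, hem.1,
          hem.2, hpq, crosses_comm.mp hcep, crosses_comm.mp hceq, hnc⟩
      by_cases hall : s(a₁, b₁) ∈ S₀ ∧ s(a₂, c₁) ∈ S₀ ∧ s(b₂, c₂) ∈ S₀
      · left
        have hsub3 : ({s(a₁, b₁), s(a₂, c₁), s(b₂, c₂)} : Finset (Sym2 (Fin (2 * n)))) ⊆ S₀ := by
          intro x hx
          simp only [Finset.mem_insert, Finset.mem_singleton] at hx
          rcases hx with rfl | rfl | rfl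
          exacts [hall.1, hall.2.1, hall.2.2]
        have hcard3 : ({s(a₁, b₁), s(a₂, c₁), s(b₂, c₂)} : Finset (Sym2 (Fin (2 * n)))).card = 3 := by
          rw [Finset.card_insert_of_notMem, Finset.card_insert_of_notMem,
            Finset.card_singleton]
          · simp only [Finset.mem_singleton]; exact hne23
          · simp only [Finset.mem_insert, Finset.mem_singleton]
            push_neg; exact ⟨hne12, hne13⟩
        have hS₀eq : ({s(a₁, b₁), s(a₂, c₁), s(b₂, c₂)} : Finset (Sym2 (Fin (2 * n)))) = S₀ :=
          Finset.eq_of_subset_of_card_le hsub3 (by omega)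
        rw [← hSS, ← hS₀eq]
        rw [Finset.image_insert, Finset.image_insert, Finset.image_singleton,
          hfg1, hfg2, hfg3]
      · by_cases h2d : (s(a₁, b₁) ∈ S₀ ∧ s(a₂, c₁) ∈ S₀) ∨
            (s(a₁, b₁) ∈ S₀ ∧ s(b₂, c₂) ∈ S₀) ∨ (s(a₂, c₁) ∈ S₀ ∧ s(b₂, c₂) ∈ S₀)
        · exfalso
          rcases h2d with ⟨hp, hq⟩ | ⟨hp, hq⟩ | ⟨hp, hq⟩
          · refine hHcase _ _ hp hq hne12 h12 (Or.inl rfl) (Or.inr (Or.inl rfl)) ?_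
            intro r hr hrS
            rcases hr with rfl | rfl | rfl
            · exact Or.inl rfl
            · exact Or.inr rfl
            · exact absurd ⟨hp, hq, hrS⟩ hall
          · refine hHcase _ _ hp hq hne13 h13 (Or.inl rfl) (Or.inr (Or.inr rfl)) ?_
            intro r hr hrS
            rcases hr with rfl | rfl | rfl
            · exact Or.inl rfl
            · exact absurd ⟨hp, hrS, hq⟩ hall
            · exact Or.inr rfl
          · refine hHcase _ _ hp hq hne23 h23 (Or.inr (Or.inl rfl)) (Or.inr (Or.inr rfl)) ?_
            intro r hr hrS
            rcases hr with rfl | rfl | rfl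
            · exact absurd ⟨hrS, hp, hq⟩ hall
            · exact Or.inl rfl
            · exact Or.inr rfl
        · right
          refine ⟨S₀, ⟨⟨hS₀sub, hS₀card⟩, ?_⟩, hSS⟩
          intro u hu v hv huv
          have hnb : ¬ (Dist u ∧ Dist v) := by
            rintro ⟨du, dv⟩
            apply h2d
            rcases du with rfl | rfl | rfl <;> rcases dv with rfl | rfl | rfl <;>
              first
                | exact absurd rfl huv
                | exact Or.inl ⟨hu, hv⟩
                | exact Or.inl ⟨hv, hu⟩
                | exact Or.inr (Or.inl ⟨hu, hv⟩)
                | exact Or.inr (Or.inl ⟨hv, hu⟩)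
                | exact Or.inr (Or.inr ⟨hu, hv⟩)
                | exact Or.inr (Or.inr ⟨hv, hu⟩)
          rw [hpres2 u (hS₀sub hu) v (hS₀sub hv) hnb]
          exact hP (f u) (hmemS u hu) (f v) (hmemS v hv) (fun hh => huv (hfinj hh))
    · rintro (rfl | ⟨S₀, ⟨⟨hsub, hcard⟩, hP⟩, rfl⟩)
      · refine ⟨⟨?_, ?_⟩, ?_⟩
        · intro x hx
          simp only [hT₀def, Finset.mem_insert, Finset.mem_singleton] at hx
          rcases hx with rfl | rfl | rfl
          · rw [← hfg1]; exact hmem' _ hg1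
          · rw [← hfg2]; exact hmem' _ hg2
          · rw [← hfg3]; exact hmem' _ hg3
        · rw [hT₀def, Finset.card_insert_of_notMem, Finset.card_insert_of_notMem,
            Finset.card_singleton]
          · simp only [Finset.mem_singleton]; exact hne23'
          · simp only [Finset.mem_insert, Finset.mem_singleton]
            push_neg; exact ⟨hne12', hne13'⟩
        · intro x hx y hy hxy
          simp only [hT₀def, Finset.mem_insert, Finset.mem_singleton] at hx hy
          rcases hx with rfl | rfl | rfl <;> rcases hy with rfl | rfl | rfl <;>
            first
              | exact absurd rfl hxy
              | exact hPW.1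
              | exact hPW.2.1
              | exact hPW.2.2
              | exact crosses_comm.mp hPW.1
              | exact crosses_comm.mp hPW.2.1
              | exact crosses_comm.mp hPW.2.2
      · refine ⟨⟨?_, ?_⟩, ?_⟩
        · intro x hx
          obtain ⟨u, hu, rfl⟩ := Finset.mem_image.mp hx
          exact hmem' _ (hsub hu)
        · rw [Finset.card_image_of_injective _ hfinj, hcard]
        · intro x hx y hy hxy
          obtain ⟨u, hu, rfl⟩ := Finset.mem_image.mp hx
          obtain ⟨v, hv, rfl⟩ := Finset.mem_image.mp hy
          have huv : u ≠ v := fun hh => hxy (by rw [hh])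
          have hcuv : Crosses u v := hP u hu v hv huv
          have hnb : ¬ (Dist u ∧ Dist v) := by
            rintro ⟨du, dv⟩
            exact hnocrossD u v du dv huv hcuv
          exact (hpres2 u (hsub hu) v (hsub hv) hnb).mp hcuv
  -- T₀ is not in the image
  have hT₀notmem : T₀ ∉ ((D.chords.powersetCard 3).filter
      fun S => ∀ x ∈ S, ∀ y ∈ S, x ≠ y → Crosses x y).image (Finset.image f) := by
    intro hmem
    obtain ⟨S₀, hS₀, hEq⟩ := Finset.mem_image.mp hmem
    rw [Finset.mem_filter] at hS₀
    have hS₀eq : S₀ = {s(a₁, b₁), s(a₂, c₁), s(b₂, c₂)} := by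
      have h2 := congrArg (Finset.image f) hEq
      have hid : (f ∘ f) = id := funext hff
      rw [Finset.image_image, hid, Finset.image_id, hT₀def, Finset.image_insert,
        Finset.image_insert, Finset.image_singleton, hfg1', hfg2', hfg3'] at h2
      exact h2
    have hm1 : s(a₁, b₁) ∈ S₀ := by rw [hS₀eq]; simp
    have hm2 : s(a₂, c₁) ∈ S₀ := by
      rw [hS₀eq]; simp only [Finset.mem_insert, Finset.mem_singleton]; tauto
    exact h12 (hS₀.2 _ hm1 _ hm2 hne12)
  unfold trefoilCount
  rw [key, Finset.card_insert_of_notMem hT₀notmem,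
    Finset.card_image_of_injective _ (Finset.image_injective hfinj)]
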